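/- arXiv:2603.03945 — 4 statements merged into one kernel-verified Lean document; each statement's English description precedes it below -/
import Mathlib

section
/- Let n be a nonempty finite index type, A : Matrix n n ℝ, β > 0, and μ : n → ℝ. If every complex eigenvalue z of β⁻¹ • A satisfies |z| < 1, then the vector λ* := (I − β⁻¹ • A)⁻¹ ·ᵥ μ satisfies (A − β • I) ·ᵥ λ* + β • μ = 0; that is, λ* is an equilibrium of the affine system x ↦ (A − β • I) x + β μ. -/
open Matrix

/-- If every complex eigenvalue `z` of `β⁻¹ • A` satisfies `|z| < 1`, then
`λ* = (I - β⁻¹ • A)⁻¹ ·ᵥ μ` is an equilibrium of `x ↦ (A - β • I) x + β μ`. -/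
theorem stmt1 {n : Type*} [Fintype n] [DecidableEq n] [Nonempty n]
    (A : Matrix n n ℝ) (β : ℝ) (hβ : 0 < β) (μ : n → ℝ)
    (hspec : ∀ z ∈ spectrum ℂ ((β⁻¹ • A).map (Complex.ofReal ·)), ‖z‖ < 1) :
    (A - β • (1 : Matrix n n ℝ)) *ᵥ (((1 : Matrix n n ℝ) - β⁻¹ • A)⁻¹ *ᵥ μ) + β • μ = 0 := by
  set B : Matrix n n ℝ := (1 : Matrix n n ℝ) - β⁻¹ • A with hB
  have h1 : (1 : ℂ) ∉ spectrum ℂ ((β⁻¹ • A).map (Complex.ofReal ·)) := by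
    intro h
    have := hspec 1 h
    simp at this
  have hu : IsUnit ((1 : Matrix n n ℂ) - (β⁻¹ • A).map (Complex.ofReal ·)) := by
    have := spectrum.notMem_iff.mp h1
    simpa using this
  have hdet : IsUnit B.det := by
    have hC : IsUnit ((1 : Matrix n n ℂ) - (β⁻¹ • A).map (Complex.ofReal ·)).det :=
      (Matrix.isUnit_iff_isUnit_det _).mp hu
    have hmap : B.map (Complex.ofReal ·) =
        (1 : Matrix n n ℂ) - (β⁻¹ • A).map (Complex.ofReal ·) := by
      rw [hB]
      ext i j
      simp [Matrix.one_apply, apply_ite]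
    have hdC : (B.map (Complex.ofReal ·)).det ≠ 0 := by
      rw [hmap]; exact hC.ne_zero
    have hre : (Complex.ofRealHom : ℝ →+* ℂ) B.det = (B.map (Complex.ofReal ·)).det := by
      exact (RingHom.map_det Complex.ofRealHom B)
    have : B.det ≠ 0 := by
      intro h
      apply hdC
      rw [← hre, h, map_zero]
    exact isUnit_iff_ne_zero.mpr this
  have hBB : B * B⁻¹ = 1 := Matrix.mul_nonsing_inv B hdet
  have hA : A - β • (1 : Matrix n n ℝ) = (-β) • B := by
    rw [hB, smul_sub, smul_smul]
    rw [neg_mul, mul_inv_cancel₀ hβ.ne', neg_one_smul, sub_neg_eq_add, neg_smul]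
    abel
  rw [hA, smul_mulVec, mulVec_mulVec, hBB, one_mulVec]
  ext i
  simp
end

section
/- Let n be a finite index type, A : Matrix n n ℝ, β : ℝ, μ : n → ℝ, and let λ̄ : ℝ → (n → ℝ) be continuous. Suppose that for all t ≥ 0, λ̄(t) = μ + ∫_0^t exp(−β(t−s)) • (A ·ᵥ λ̄(s)) ds (componentwise). Then for every t > 0, λ̄ is differentiable at t with derivative λ̄'(t) = (A − β • I) ·ᵥ λ̄(t) + β • μ. -/
open Matrix

/-- Mean-field dynamics of a multivariate Hawkes process with exponential kernel:
if `λ̄ t = μ + ∫ s in 0..t, exp (-β (t-s)) • (A ·ᵥ λ̄ s)` for all `t ≥ 0` and `λ̄` is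
continuous, then for every `t > 0`, `λ̄` is differentiable at `t` with derivative
`(A - β • I) ·ᵥ λ̄ t + β • μ`. -/
theorem stmt3 {n : Type*} [Fintype n] [DecidableEq n]
    (A : Matrix n n ℝ) (β : ℝ) (μ : n → ℝ)
    (lam : ℝ → n → ℝ) (hcont : Continuous lam)
    (heq : ∀ t : ℝ, 0 ≤ t →
      lam t = μ + ∫ s in (0 : ℝ)..t, Real.exp (-β * (t - s)) • (A *ᵥ lam s))
    (t : ℝ) (ht : 0 < t) :
    HasDerivAt lam ((A - β • (1 : Matrix n n ℝ)) *ᵥ lam t + β • μ) t := by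
  have hAc : Continuous fun s => A *ᵥ lam s :=
    (A.mulVecLin.continuous_of_finiteDimensional).comp hcont
  set F : ℝ → n → ℝ := fun s => Real.exp (β * s) • (A *ᵥ lam s) with hF
  have hFc : Continuous F :=
    (Real.continuous_exp.comp (continuous_const.mul continuous_id)).smul hAc
  set g : ℝ → n → ℝ := fun u => ∫ s in (0:ℝ)..u, F s with hg
  have hgd : HasDerivAt g (F t) t :=
    intervalIntegral.integral_hasDerivAt_right (hFc.intervalIntegrable 0 t)
      hFc.aestronglyMeasurable.stronglyMeasurableAtFilter hFc.continuousAt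
  have hed : HasDerivAt (fun u => Real.exp (-β * u)) (-β * Real.exp (-β * t)) t := by
    have := ((hasDerivAt_id t).const_mul (-β)).exp
    simpa [mul_comm] using this
  have hhd : HasDerivAt (fun u => μ + Real.exp (-β * u) • g u)
      ((-β * Real.exp (-β * t)) • g t + Real.exp (-β * t) • F t) t := by
    have := (hed.smul hgd).const_add μ
    simpa [add_comm] using this
  have hkey : ∀ u : ℝ, 0 ≤ u → lam u = μ + Real.exp (-β * u) • g u := by
    intro u hu
    rw [heq u hu]
    congr 1
    rw [hg, ← intervalIntegral.integral_smul]
    apply intervalIntegral.integral_congr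
    intro s hs
    simp only [hF, smul_smul, ← Real.exp_add]
    congr 1
    ring
  have heve : lam =ᶠ[nhds t] fun u => μ + Real.exp (-β * u) • g u := by
    filter_upwards [eventually_gt_nhds ht] with u hu using hkey u hu.le
  have hmain := hhd.congr_of_eventuallyEq heve
  refine hmain.congr_deriv ?_
  have hgt : Real.exp (-β * t) • g t = lam t - μ := by
    rw [hkey t ht.le]; abel
  rw [sub_mulVec, smul_mulVec, one_mulVec,
    show (-β * Real.exp (-β * t)) • g t = (-β) • (Real.exp (-β * t) • g t) from mul_smul _ _ _,
    hgt, show Real.exp (-β * t) • F t = A *ᵥ lam t by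
      simp only [hF, smul_smul, ← Real.exp_add]; rw [show -β * t + β * t = 0 by ring]; simp]
  module
end

section
/- Let n be a nonempty finite index type and M : Matrix n n ℝ. Let κ > 0 and suppose every complex eigenvalue of M has real part strictly less than −κ. Then there exists a constant C > 0 such that for all t ≥ 0, the operator norm of the matrix exponential satisfies ‖exp(t • M)‖ ≤ C · exp(−κ t). -/
open Matrix
open scoped Matrix.Norms.L2Operator

namespace Stmt7Aux

open NormedSpace

set_option linter.unusedSectionVars false


variable {n : Type*} [Fintype n] [DecidableEq n]

lemma coord_le_norm {𝕜 : Type*} [RCLike 𝕜] (x : EuclideanSpace 𝕜 n) (i : n) : ‖x i‖ ≤ ‖x‖ := by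
  rw [EuclideanSpace.norm_eq]
  calc ‖x i‖ = Real.sqrt (‖x i‖ ^ 2) := (Real.sqrt_sq (norm_nonneg _)).symm
    _ ≤ _ := Real.sqrt_le_sqrt (Finset.single_le_sum (f := fun j => ‖x j‖ ^ 2)
        (fun j _ => by positivity) (Finset.mem_univ i))

lemma norm_e2_map (v : n → ℝ) :
    ‖(WithLp.equiv 2 (n → ℂ)).symm (fun i => (v i : ℂ))‖ =
      ‖(WithLp.equiv 2 (n → ℝ)).symm v‖ := by
  simp [EuclideanSpace.norm_eq]

lemma mulVec_map (R : Matrix n n ℝ) (v : n → ℝ) :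
    (fun i => ((R *ᵥ v) i : ℂ)) = (R.map (Complex.ofReal ·)) *ᵥ (fun i => (v i : ℂ)) := by
  ext i
  simp only [Matrix.mulVec, dotProduct, Matrix.map_apply]
  push_cast
  rfl

lemma norm_le_norm_map (R : Matrix n n ℝ) : ‖R‖ ≤ ‖R.map (Complex.ofReal ·)‖ := by
  rw [Matrix.l2_opNorm_def]
  refine ContinuousLinearMap.opNorm_le_bound _ (norm_nonneg _) fun x => ?_
  show ‖(WithLp.equiv 2 (n → ℝ)).symm (R *ᵥ (WithLp.equiv 2 (n → ℝ) x))‖ ≤ _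
  rw [← norm_e2_map, mulVec_map]
  calc _ ≤ ‖R.map (Complex.ofReal ·)‖ *
      ‖(WithLp.equiv 2 (n → ℂ)).symm (fun i => ((WithLp.equiv 2 (n → ℝ) x) i : ℂ))‖ :=
        Matrix.l2_opNorm_mulVec _ _
    _ = _ := by rw [norm_e2_map]; simp



variable {n : Type*} [Fintype n] [DecidableEq n]

lemma map_exp_ofReal (R : Matrix n n ℝ) :
    (exp R).map (Complex.ofReal ·) = exp (R.map (Complex.ofReal ·)) := by
  haveI : CompleteSpace (Matrix n n ℝ) := FiniteDimensional.complete ℝ _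
  haveI : CompleteSpace (Matrix n n ℂ) := FiniteDimensional.complete ℂ _
  have hc : Continuous (Complex.ofRealHom.mapMatrix : Matrix n n ℝ →+* Matrix n n ℂ) := by
    show Continuous fun R : Matrix n n ℝ => R.map (Complex.ofRealHom : ℝ → ℂ)
    exact continuous_id.matrix_map Complex.continuous_ofReal
  have h := map_exp_of_mem_ball (𝕂 := ℝ) (Complex.ofRealHom.mapMatrix : Matrix n n ℝ →+* Matrix n n ℂ) hc R
    ((expSeries_radius_eq_top ℝ (Matrix n n ℝ)).symm ▸ edist_lt_top _ _)
  simp only [RingHom.mapMatrix_apply] at h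
  rw [show (fun (x:ℝ) => (Complex.ofReal x)) = (Complex.ofRealHom : ℝ → ℂ) from rfl]
  rw [h]

lemma key_scalar (κ ε t : ℝ) (hε : 0 < ε) (ht : 0 ≤ t) (j : ℕ) :
    Real.exp ((-κ - ε) * t) * ((j.factorial : ℝ)⁻¹ * t ^ j) ≤ ε⁻¹ ^ j * Real.exp (-κ * t) := by
  have h1 : (ε * t) ^ j / (j.factorial : ℝ) ≤ Real.exp (ε * t) :=
    Real.pow_div_factorial_le_exp _ (mul_nonneg hε.le ht) j
  have h2 : (j.factorial : ℝ)⁻¹ * t ^ j ≤ ε⁻¹ ^ j * Real.exp (ε * t) := by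
    rw [mul_pow] at h1
    have hεj : (0:ℝ) < ε ^ j := pow_pos hε j
    calc (j.factorial : ℝ)⁻¹ * t ^ j = ε⁻¹ ^ j * (ε ^ j * t ^ j / (j.factorial : ℝ)) := by
          field_simp
          rw [one_div, inv_pow, mul_assoc, inv_mul_cancel₀ hεj.ne', mul_one]
      _ ≤ ε⁻¹ ^ j * Real.exp (ε * t) := by
          apply mul_le_mul_of_nonneg_left h1 (by positivity)
  calc Real.exp ((-κ - ε) * t) * ((j.factorial : ℝ)⁻¹ * t ^ j)
      ≤ Real.exp ((-κ - ε) * t) * (ε⁻¹ ^ j * Real.exp (ε * t)) :=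
        mul_le_mul_of_nonneg_left h2 (Real.exp_nonneg _)
    _ = ε⁻¹ ^ j * (Real.exp ((-κ - ε) * t) * Real.exp (ε * t)) := by ring
    _ = ε⁻¹ ^ j * Real.exp (-κ * t) := by rw [← Real.exp_add]; ring_nf

lemma gen_eig_bound (A : Matrix n n ℂ) (κ : ℝ) (μ : ℂ) (hμ : μ.re < -κ)
    (x : n → ℂ) (k0 : ℕ) (hx : ((A - μ • 1) ^ k0) *ᵥ x = 0) :
    ∃ C, 0 ≤ C ∧ ∀ t : ℝ, 0 ≤ t →
      ‖(WithLp.equiv 2 (n → ℂ)).symm (exp ((t:ℂ) • A) *ᵥ x)‖ ≤ C * Real.exp (-κ * t) := by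
  classical
  haveI : CompleteSpace (Matrix n n ℂ) := FiniteDimensional.complete ℂ _
  set N : Matrix n n ℂ := A - μ • 1 with hN
  set ε : ℝ := -κ - μ.re with hε
  have hε0 : 0 < ε := by simp [hε]; linarith
  set v : ℕ → EuclideanSpace ℂ n :=
    fun j => (WithLp.equiv 2 (n → ℂ)).symm ((N ^ j) *ᵥ x) with hv
  refine ⟨∑ j ∈ Finset.range k0, ε⁻¹ ^ j * ‖v j‖, by positivity, fun t ht => ?_⟩
  -- the CLM sending a matrix B to the Euclidean vector (B *ᵥ x)
  set ψ : Matrix n n ℂ →L[ℂ] EuclideanSpace ℂ n :=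
    LinearMap.toContinuousLinearMap
      { toFun := fun B => (WithLp.equiv 2 (n → ℂ)).symm (B *ᵥ x),
        map_add' := fun B C => by simp [Matrix.add_mulVec],
        map_smul' := fun c B => by simp [Matrix.smul_mulVec] } with hψ
  have hψ_apply : ∀ B : Matrix n n ℂ, ψ B = (WithLp.equiv 2 (n → ℂ)).symm (B *ᵥ x) :=
    fun B => rfl
  -- decompose the exponential
  have hsplit : (t:ℂ) • A = ((t:ℂ) * μ) • (1 : Matrix n n ℂ) + (t:ℂ) • N := by
    rw [hN, smul_sub, smul_smul]
    abel
  have hcomm : Commute (((t:ℂ) * μ) • (1 : Matrix n n ℂ)) ((t:ℂ) • N) :=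
    ((Commute.one_left ((t:ℂ) • N)).smul_left ((t:ℂ) * μ))
  have hexp1 : exp ((((t:ℂ) * μ)) • (1 : Matrix n n ℂ))
      = Complex.exp ((t:ℂ) * μ) • (1 : Matrix n n ℂ) := by
    rw [← Algebra.algebraMap_eq_smul_one, ← algebraMap_exp_comm,
      Algebra.algebraMap_eq_smul_one, ← Complex.exp_eq_exp_ℂ]
  have hsplit2 : exp ((t:ℂ) • A)
      = Complex.exp ((t:ℂ) * μ) • exp ((t:ℂ) • N) := by
    rw [hsplit, Matrix.exp_add_of_commute _ _ hcomm, hexp1, smul_mul_assoc, one_mul]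
  -- expand exp (t • N) against x
  have hsum : Summable (fun j : ℕ => ((j.factorial : ℂ))⁻¹ • ((t:ℂ) • N) ^ j) :=
    expSeries_summable' ((t:ℂ) • N)
  have hterm : ∀ j : ℕ, ψ (((j.factorial : ℂ))⁻¹ • ((t:ℂ) • N) ^ j)
      = (((j.factorial : ℂ))⁻¹ * (t:ℂ) ^ j) • v j := by
    intro j
    rw [_root_.map_smul, smul_pow, _root_.map_smul, hψ_apply, smul_smul, hv]
  have hexpand : ψ (exp ((t:ℂ) • N))
      = ∑' j : ℕ, (((j.factorial : ℂ))⁻¹ * (t:ℂ) ^ j) • v j := by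
    rw [exp_eq_tsum ℂ, ψ.map_tsum hsum]
    exact tsum_congr hterm
  -- terms vanish for j ≥ k0
  have hvanish : ∀ j ∉ Finset.range k0,
      (((j.factorial : ℂ))⁻¹ * (t:ℂ) ^ j) • v j = 0 := by
    intro j hj
    rw [Finset.mem_range, not_lt] at hj
    have hNj : (N ^ j) *ᵥ x = 0 := by
      have : N ^ j = N ^ (j - k0) * N ^ k0 := by
        rw [← pow_add]
        congr 1
        omega
      rw [this, ← Matrix.mulVec_mulVec, hx, Matrix.mulVec_zero]
    simp [hv, hNj]
  have hfin : ψ (exp ((t:ℂ) • N))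
      = ∑ j ∈ Finset.range k0, (((j.factorial : ℂ))⁻¹ * (t:ℂ) ^ j) • v j := by
    rw [hexpand]
    exact tsum_eq_sum hvanish
  -- put everything together
  have hmain : (WithLp.equiv 2 (n → ℂ)).symm (exp ((t:ℂ) • A) *ᵥ x)
      = Complex.exp ((t:ℂ) * μ) • ∑ j ∈ Finset.range k0,
          (((j.factorial : ℂ))⁻¹ * (t:ℂ) ^ j) • v j := by
    rw [← hψ_apply, hsplit2, _root_.map_smul, hfin]
  rw [hmain, norm_smul]
  have hne : ‖Complex.exp ((t:ℂ) * μ)‖ = Real.exp ((-κ - ε) * t) := by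
    rw [Complex.norm_exp]
    congr 1
    simp [hε, Complex.mul_re]
    ring
  rw [hne]
  calc Real.exp ((-κ - ε) * t) * ‖∑ j ∈ Finset.range k0,
        (((j.factorial : ℂ))⁻¹ * (t:ℂ) ^ j) • v j‖
      ≤ Real.exp ((-κ - ε) * t) * ∑ j ∈ Finset.range k0,
          ((j.factorial : ℝ)⁻¹ * t ^ j) * ‖v j‖ := by
        apply mul_le_mul_of_nonneg_left _ (Real.exp_nonneg _)
        refine le_trans (norm_sum_le _ _) (Finset.sum_le_sum fun j _ => ?_)
        rw [norm_smul]
        apply mul_le_mul_of_nonneg_right _ (norm_nonneg _)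
        have : ((j.factorial : ℂ))⁻¹ * (t:ℂ) ^ j
            = (((j.factorial : ℝ)⁻¹ * t ^ j : ℝ) : ℂ) := by push_cast; ring
        rw [this, Complex.norm_real, Real.norm_eq_abs, abs_of_nonneg (by positivity)]
    _ = ∑ j ∈ Finset.range k0,
          Real.exp ((-κ - ε) * t) * (((j.factorial : ℝ)⁻¹ * t ^ j)) * ‖v j‖ := by
        rw [Finset.mul_sum]
        exact Finset.sum_congr rfl fun j _ => by ring
    _ ≤ ∑ j ∈ Finset.range k0, (ε⁻¹ ^ j * Real.exp (-κ * t)) * ‖v j‖ := by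
        refine Finset.sum_le_sum fun j _ => ?_
        exact mul_le_mul_of_nonneg_right (key_scalar κ ε t hε0 ht j) (norm_nonneg _)
    _ = (∑ j ∈ Finset.range k0, ε⁻¹ ^ j * ‖v j‖) * Real.exp (-κ * t) := by
        rw [Finset.sum_mul]
        exact Finset.sum_congr rfl fun j _ => by ring

end Stmt7Aux

open Stmt7Aux NormedSpace

/-- If every complex eigenvalue of `M` has real part strictly less than `-κ` with
`κ > 0`, then there is `C > 0` with `‖exp (t • M)‖ ≤ C * exp (-κ t)` for all `t ≥ 0`,
where `‖·‖` is the operator norm on matrices induced by the Euclidean norm. -/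
theorem stmt7 {n : Type*} [Fintype n] [DecidableEq n] [Nonempty n]
    (M : Matrix n n ℝ) (κ : ℝ) (hκ : 0 < κ)
    (hspec : ∀ z ∈ spectrum ℂ (M.map (Complex.ofReal ·)), z.re < -κ) :
    ∃ C > 0, ∀ t : ℝ, 0 ≤ t →
      ‖NormedSpace.exp (t • M)‖ ≤ C * Real.exp (-κ * t) := by
  classical
  set A : Matrix n n ℂ := M.map (Complex.ofReal ·) with hA
  -- the submodule of "good" vectors
  set S : Submodule ℂ (n → ℂ) :=
    { carrier := {x | ∃ C, 0 ≤ C ∧ ∀ t : ℝ, 0 ≤ t →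
        ‖(WithLp.equiv 2 (n → ℂ)).symm (exp ((t:ℂ) • A) *ᵥ x)‖ ≤ C * Real.exp (-κ * t)}
      add_mem' := by
        rintro x y ⟨Cx, hCx, hx⟩ ⟨Cy, hCy, hy⟩
        refine ⟨Cx + Cy, by linarith, fun t ht => ?_⟩
        rw [Matrix.mulVec_add, WithLp.equiv_symm_apply, WithLp.toLp_add]
        calc ‖_ + _‖ ≤ _ + _ := norm_add_le _ _
          _ ≤ Cx * Real.exp (-κ * t) + Cy * Real.exp (-κ * t) :=
              add_le_add (hx t ht) (hy t ht)
          _ = (Cx + Cy) * Real.exp (-κ * t) := by ring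
      zero_mem' := ⟨0, le_refl 0, fun t ht => by simp [Matrix.mulVec_zero]⟩
      smul_mem' := by
        rintro c x ⟨C, hC, hx⟩
        refine ⟨‖c‖ * C, by positivity, fun t ht => ?_⟩
        rw [Matrix.mulVec_smul, WithLp.equiv_symm_apply, WithLp.toLp_smul, norm_smul, mul_assoc]
        exact mul_le_mul_of_nonneg_left (hx t ht) (norm_nonneg c) } with hS
  -- every vector is good
  have hall : ∀ x : n → ℂ, x ∈ S := by
    have htop := Module.End.iSup_maxGenEigenspace_eq_top (Matrix.toLinAlgEquiv' A)
    intro x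
    have hx : x ∈ (⊤ : Submodule ℂ (n → ℂ)) := Submodule.mem_top
    rw [← htop] at hx
    revert x
    rw [← SetLike.le_def, iSup_le_iff]
    intro μ x hx
    rcases eq_or_ne x 0 with rfl | hx0
    · exact S.zero_mem
    -- translate the generalized eigenvector condition to matrices
    obtain ⟨k, hk⟩ := (Module.End.mem_maxGenEigenspace _ _ _).mp hx
    have hEnd : (Matrix.toLinAlgEquiv' A - μ • 1) ^ k
        = Matrix.toLinAlgEquiv' ((A - μ • 1) ^ k) := by
      rw [map_pow, map_sub, _root_.map_smul, _root_.map_one]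
    have hk' : ((A - μ • 1) ^ k) *ᵥ x = 0 := by
      rw [hEnd] at hk
      exact hk
    -- μ is an eigenvalue, hence in the spectrum
    have hμspec : μ ∈ spectrum ℂ A := by
      have hgen : Module.End.HasGenEigenvalue (Matrix.toLinAlgEquiv' A) μ k := by
        rw [Module.End.HasGenEigenvalue, Module.End.HasUnifEigenvalue, Submodule.ne_bot_iff]
        refine ⟨x, ?_, hx0⟩
        rw [Module.End.mem_genEigenspace_nat, LinearMap.mem_ker, hEnd]
        exact hk'
      have := Module.End.hasEigenvalue_of_hasGenEigenvalue hgen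
      rw [Module.End.hasEigenvalue_iff_mem_spectrum] at this
      rwa [AlgEquiv.spectrum_eq (Matrix.toLinAlgEquiv' (n := n) (R := ℂ)) A] at this
    exact gen_eig_bound A κ μ (hspec μ hμspec) x k hk'
  -- constants for the standard basis vectors
  choose Cf hCf0 hCf using fun j : n => hall (Pi.single j 1)
  have hsum0 : (0:ℝ) ≤ ∑ j, Cf j := Finset.sum_nonneg fun j _ => hCf0 j
  refine ⟨1 + ∑ j, Cf j, by linarith, fun t ht => ?_⟩
  have hmapsmul : (t • M).map (Complex.ofReal ·) = (t:ℂ) • A := by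
    ext i j
    simp [hA, Complex.real_smul]
  have step1 : ‖NormedSpace.exp (t • M)‖ ≤ ‖exp ((t:ℂ) • A)‖ := by
    calc ‖exp (t • M)‖ ≤ ‖(exp (t • M)).map (Complex.ofReal ·)‖ := norm_le_norm_map _
      _ = ‖exp ((t:ℂ) • A)‖ := by rw [map_exp_ofReal, hmapsmul]
  -- operator norm bound for the complex exponential
  have step2 : ‖exp ((t:ℂ) • A)‖ ≤ (∑ j, Cf j) * Real.exp (-κ * t) := by
    rw [Matrix.l2_opNorm_def]
    refine ContinuousLinearMap.opNorm_le_bound _ (mul_nonneg hsum0 (Real.exp_nonneg _)) fun y => ?_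
    show ‖(WithLp.equiv 2 (n → ℂ)).symm
        (exp ((t:ℂ) • A) *ᵥ (WithLp.equiv 2 (n → ℂ) y))‖ ≤ _
    set z : n → ℂ := WithLp.equiv 2 (n → ℂ) y with hz
    have hmul : exp ((t:ℂ) • A) *ᵥ z
        = ∑ j, z j • (exp ((t:ℂ) • A) *ᵥ Pi.single j 1) := by
      ext i
      rw [Finset.sum_apply]
      simp only [Pi.smul_apply, Matrix.mulVec_single, smul_eq_mul, mul_one]
      simp [Matrix.mulVec, dotProduct, mul_comm]
    rw [hmul]
    have : (WithLp.equiv 2 (n → ℂ)).symm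
          (∑ j, z j • (exp ((t:ℂ) • A) *ᵥ Pi.single j 1))
        = ∑ j, z j • (WithLp.equiv 2 (n → ℂ)).symm
            (exp ((t:ℂ) • A) *ᵥ Pi.single j 1) := by
      rw [show ((WithLp.equiv 2 (n → ℂ)).symm : (n → ℂ) → EuclideanSpace ℂ n)
          = ((WithLp.linearEquiv 2 ℂ (n → ℂ)).symm : (n → ℂ) →ₗ[ℂ] EuclideanSpace ℂ n) from rfl,
        map_sum]
      exact Finset.sum_congr rfl fun j _ => by rw [_root_.map_smul]
    rw [this]
    calc ‖∑ j, z j • (WithLp.equiv 2 (n → ℂ)).symm (exp ((t:ℂ) • A) *ᵥ Pi.single j 1)‖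
        ≤ ∑ j, ‖z j‖ * ‖(WithLp.equiv 2 (n → ℂ)).symm
            (exp ((t:ℂ) • A) *ᵥ Pi.single j 1)‖ := by
          refine le_trans (norm_sum_le _ _) (Finset.sum_le_sum fun j _ => ?_)
          rw [norm_smul]
      _ ≤ ∑ j, ‖y‖ * (Cf j * Real.exp (-κ * t)) := by
          refine Finset.sum_le_sum fun j _ => ?_
          have h1 : ‖z j‖ ≤ ‖y‖ := coord_le_norm y j
          exact mul_le_mul h1 (hCf j t ht) (norm_nonneg _) (norm_nonneg _)
      _ = (∑ j, Cf j) * Real.exp (-κ * t) * ‖y‖ := by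
          rw [← Finset.mul_sum, ← Finset.sum_mul]
          ring
  have hE : 0 < Real.exp (-κ * t) := Real.exp_pos _
  calc ‖NormedSpace.exp (t • M)‖ ≤ (∑ j, Cf j) * Real.exp (-κ * t) :=
        le_trans step1 step2
    _ ≤ (1 + ∑ j, Cf j) * Real.exp (-κ * t) := by
        have : (0:ℝ) ≤ ∑ j, Cf j := Finset.sum_nonneg fun j _ => hCf0 j
        nlinarith
end

section
/- (Exponential convergence rate, Proposition 2.) Let n be a nonempty finite index type, A : Matrix n n ℝ, β > 0, μ : n → ℝ, and let 0 ≤ r < 1 be such that every complex eigenvalue z of β⁻¹ • A satisfies |z| ≤ r. Set λ* := (I − β⁻¹ • A)⁻¹ ·ᵥ μ. Let λ̄ : ℝ → (n → ℝ) satisfy λ̄'(t) = (A − β • I) ·ᵥ λ̄(t) + β • μ for all t ≥ 0. Then for every κ with 0 < κ < β(1 − r), there exists a constant C > 0 such that for all t ≥ 0, ‖λ̄(t) − λ*‖ ≤ C · exp(−κ t) · ‖λ̄(0) − λ*‖. -/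
open Matrix

/-- The Euclidean norm of a vector `x : n → ℝ`. -/
noncomputable def euclideanNorm {n : Type*} [Fintype n] (x : n → ℝ) : ℝ :=
  ‖(WithLp.equiv 2 (n → ℝ)).symm x‖

open NormedSpace
open scoped Nat Pointwise

attribute [local instance] Matrix.linftyOpNormedAddCommGroup Matrix.linftyOpNormedRing
  Matrix.linftyOpNormedAlgebra

set_option linter.unusedTactic false
set_option linter.unusedSectionVars false
set_option maxHeartbeats 1000000

section Aux

variable {n : Type*} [Fintype n] [DecidableEq n]


/-- Eigenvector relation for matrix exponential. -/
lemma exp_mulVec_eigen (M : Matrix n n ℂ) {l : ℂ} {v : n → ℂ}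
    (hv : M *ᵥ v = l • v) : exp M *ᵥ v = Complex.exp l • v := by
  classical
  let L : Matrix n n ℂ →ₗ[ℂ] (n → ℂ) :=
    { toFun := fun N => N *ᵥ v
      map_add' := fun a b => Matrix.add_mulVec a b v
      map_smul' := fun c N => Matrix.smul_mulVec c N v }
  let Lc : Matrix n n ℂ →L[ℂ] (n → ℂ) := ⟨L, L.continuous_of_finiteDimensional⟩
  have hpow : ∀ k : ℕ, M ^ k *ᵥ v = l ^ k • v := by
    intro k
    induction k with
    | zero => simp
    | succ k ih =>
        rw [pow_succ, ← Matrix.mulVec_mulVec, hv, Matrix.mulVec_smul, ih,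
          smul_smul, pow_succ]
        ring_nf
  have hsum : Summable fun k : ℕ => (k !⁻¹ : ℂ) • M ^ k := expSeries_summable' (𝕂 := ℂ) M
  have hsum2 : Summable fun k : ℕ => (k !⁻¹ : ℂ) * l ^ k := by
    simpa [smul_eq_mul] using expSeries_summable' (𝕂 := ℂ) l
  have h1 : exp M *ᵥ v = Lc (exp M) := rfl
  rw [h1, exp_eq_tsum (𝕂 := ℂ)]
  rw [Lc.map_tsum hsum]
  have h2 : ∀ k : ℕ, Lc ((k ! ⁻¹ : ℂ) • M ^ k) = ((k !⁻¹ : ℂ) * l ^ k) • v := by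
    intro k
    rw [_root_.map_smul]
    show (k !⁻¹ : ℂ) • (M ^ k *ᵥ v) = _
    rw [hpow k, smul_smul]
  rw [tsum_congr h2, hsum2.tsum_smul_const]
  congr 1
  rw [Complex.exp_eq_exp_ℂ, exp_eq_tsum (𝕂 := ℂ)]
  simp [smul_eq_mul]

/-- exp of a matrix lies in the subalgebra generated by the matrix. -/
lemma exp_mem_adjoin (M : Matrix n n ℂ) : exp M ∈ Algebra.adjoin ℂ ({M} : Set (Matrix n n ℂ)) := by
  classical
  set S : Submodule ℂ (Matrix n n ℂ) :=
    Subalgebra.toSubmodule (Algebra.adjoin ℂ ({M} : Set (Matrix n n ℂ))) with hS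
  have hclosed : IsClosed (S : Set (Matrix n n ℂ)) := Submodule.closed_of_finiteDimensional S
  have hsum : Summable fun k : ℕ => (k !⁻¹ : ℂ) • M ^ k := expSeries_summable' (𝕂 := ℂ) M
  have hhs : HasSum (fun k : ℕ => (k !⁻¹ : ℂ) • M ^ k) (exp M) := by
    rw [exp_eq_tsum (𝕂 := ℂ)]
    exact hsum.hasSum
  have htend := hhs.tendsto_sum_nat
  have hmem : ∀ m : ℕ, (∑ k ∈ Finset.range m, (k !⁻¹ : ℂ) • M ^ k) ∈ S := by
    intro m
    refine Submodule.sum_mem S fun k _ => Submodule.smul_mem S _ ?_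
    exact Subalgebra.pow_mem _ (Algebra.self_mem_adjoin_singleton ℂ M) k
  exact hclosed.mem_of_tendsto htend (Filter.Eventually.of_forall hmem)

/-- Spectral mapping (subset direction) for the matrix exponential. -/
lemma spectrum_exp_subset [Nonempty n] (M : Matrix n n ℂ) :
    spectrum ℂ (exp M) ⊆ Complex.exp '' spectrum ℂ M := by
  classical
  obtain ⟨p, hp⟩ : ∃ p : Polynomial ℂ, Polynomial.aeval M p = exp M := by
    have := exp_mem_adjoin M
    rwa [Algebra.adjoin_singleton_eq_range_aeval, AlgHom.mem_range] at this
  have hnon : (spectrum ℂ M).Nonempty := spectrum.nonempty M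
  have heig : ∀ l ∈ spectrum ℂ M, Polynomial.eval l p = Complex.exp l := by
    intro l hl
    have hdet : ((l • (1 : Matrix n n ℂ)) - M).det = 0 := by
      have h1 : ¬IsUnit (algebraMap ℂ (Matrix n n ℂ) l - M) := spectrum.mem_iff.mp hl
      rw [Algebra.algebraMap_eq_smul_one] at h1
      by_contra hd
      exact h1 ((Matrix.isUnit_iff_isUnit_det _).mpr (isUnit_iff_ne_zero.mpr hd))
    obtain ⟨v, hv0, hveq⟩ := (Matrix.exists_mulVec_eq_zero_iff).mpr hdet
    have hv : M *ᵥ v = l • v := by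
      rw [Matrix.sub_mulVec] at hveq
      have := sub_eq_zero.mp hveq
      rw [← this, Matrix.smul_mulVec, Matrix.one_mulVec]
    have hexp : exp M *ᵥ v = Complex.exp l • v := exp_mulVec_eigen M hv
    have hpolypow : ∀ k : ℕ, M ^ k *ᵥ v = l ^ k • v := by
      intro k
      induction k with
      | zero => simp
      | succ k ih =>
          rw [pow_succ, ← Matrix.mulVec_mulVec, hv, Matrix.mulVec_smul, ih, smul_smul, pow_succ]
          ring_nf
    have hpoly : Polynomial.aeval M p *ᵥ v = Polynomial.eval l p • v := by
      let L : Matrix n n ℂ →ₗ[ℂ] (n → ℂ) :=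
        { toFun := fun N => N *ᵥ v
          map_add' := fun a b => Matrix.add_mulVec a b v
          map_smul' := fun c N => Matrix.smul_mulVec c N v }
      show L _ = _
      rw [Polynomial.aeval_eq_sum_range, Polynomial.eval_eq_sum_range, map_sum, Finset.sum_smul]
      refine Finset.sum_congr rfl fun k _ => ?_
      rw [_root_.map_smul]
      show p.coeff k • (M ^ k *ᵥ v) = _
      rw [hpolypow k, smul_smul]
    rw [hp, hexp] at hpoly
    have := sub_eq_zero.mpr hpoly
    rw [← sub_smul] at this
    rcases smul_eq_zero.mp this with h | h
    · exact (sub_eq_zero.mp h).symm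
    · exact absurd h hv0
  rw [← hp, spectrum.map_polynomial_aeval_of_nonempty M p hnon]
  rintro z ⟨l, hl, rfl⟩
  exact ⟨l, hl, (heig l hl).symm⟩

lemma norm_map_ofReal (M : Matrix n n ℝ) : ‖M.map (Complex.ofReal ·)‖ = ‖M‖ := by
  rw [Matrix.linfty_opNorm_def, Matrix.linfty_opNorm_def]
  congr 1
  refine Finset.sup_congr rfl fun i _ => Finset.sum_congr rfl fun j _ => ?_
  simp [Matrix.map_apply]

lemma exp_norm_decay [Nonempty n] (B : Matrix n n ℝ) (κ δ : ℝ) (hδ : 0 < δ)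
    (hspec : ∀ z ∈ spectrum ℂ (B.map (Complex.ofReal ·)), z.re ≤ -(κ + δ)) :
    ∃ C > 0, ∀ t : ℝ, 0 ≤ t → ‖exp (t • B)‖ ≤ C * Real.exp (-κ * t) := by
  classical
  set Bc : Matrix n n ℂ := B.map (Complex.ofReal ·) with hBc_def
  set Qc : Matrix n n ℂ := Bc + (κ : ℂ) • 1 with hQc_def
  -- spectrum of Qc has real parts ≤ -δ
  have hQspec : ∀ z ∈ spectrum ℂ Qc, z.re ≤ -δ := by
    intro z hz
    have hz' : z ∈ ({(κ : ℂ)} : Set ℂ) + spectrum ℂ Bc := by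
      rw [spectrum.singleton_add_eq]
      have : algebraMap ℂ (Matrix n n ℂ) (κ : ℂ) + Bc = Qc := by
        rw [Algebra.algebraMap_eq_smul_one, add_comm]
      rwa [this]
    obtain ⟨a, ha, b, hb, rfl⟩ := Set.mem_add.mp hz'
    rcases Set.mem_singleton_iff.mp ha with rfl
    have hbre := hspec b hb
    simp only [Complex.add_re, Complex.ofReal_re]
    linarith
  set E := exp Qc with hE_def
  have hsr : spectralRadius ℂ E ≤ ENNReal.ofReal (Real.exp (-δ)) := by
    refine iSup₂_le fun z hz => ?_
    obtain ⟨l, hl, rfl⟩ := spectrum_exp_subset Qc hz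
    have h1 : ‖Complex.exp l‖ = Real.exp l.re := Complex.norm_exp l
    have h2 : Real.exp l.re ≤ Real.exp (-δ) := Real.exp_le_exp.mpr (hQspec l hl)
    rw [← ENNReal.ofReal_coe_nnreal]
    refine ENNReal.ofReal_le_ofReal ?_
    rw [coe_nnnorm, h1]
    exact h2
  have hlt1 : spectralRadius ℂ E < 1 := by
    refine lt_of_le_of_lt hsr ?_
    rw [← ENNReal.ofReal_one]
    exact ENNReal.ofReal_lt_ofReal_iff_of_nonneg (Real.exp_pos _).le |>.mpr
      (Real.exp_lt_one_iff.mpr (by linarith)) |>.trans_le le_rfl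
  have hg := spectrum.pow_nnnorm_pow_one_div_tendsto_nhds_spectralRadius E
  have hev : ∀ᶠ m : ℕ in Filter.atTop, (‖E ^ m‖₊ : ENNReal) ^ (1 / (m : ℝ)) < 1 :=
    hg.eventually_lt_const hlt1
  obtain ⟨N, hN⟩ := Filter.eventually_atTop.mp hev
  set N1 : ℕ := max N 1 with hN1_def
  have hpow : ∀ m : ℕ, N1 ≤ m → ‖E ^ m‖ ≤ 1 := by
    intro m hm
    have hm1 : 1 ≤ m := le_trans (le_max_right _ _) hm
    have h := hN m (le_trans (le_max_left _ _) hm)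
    have hm0 : (m : ℝ) ≠ 0 := by positivity
    have hx : (((‖E ^ m‖₊ : ENNReal) ^ (1 / (m : ℝ))) ^ (m : ℝ)) = (‖E ^ m‖₊ : ENNReal) := by
      rw [← ENNReal.rpow_mul, one_div, inv_mul_cancel₀ hm0, ENNReal.rpow_one]
    have h2 := ENNReal.rpow_le_rpow h.le (by positivity : (0:ℝ) ≤ (m : ℝ))
    rw [hx, ENNReal.one_rpow] at h2
    have h3 : ‖E ^ m‖₊ ≤ 1 := by exact_mod_cast h2
    exact_mod_cast h3
  have hcont : Continuous fun t : ℝ => exp ((t : ℂ) • Qc) :=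
    exp_continuous.comp ((Complex.continuous_ofReal).smul continuous_const)
  obtain ⟨C2, hC2⟩ := (isCompact_Icc (a := (0:ℝ)) (b := (N1 : ℝ) + 1)).exists_bound_of_continuousOn
    hcont.continuousOn
  have hC2_nonneg : 0 ≤ C2 := le_trans (norm_nonneg _) (hC2 0 ⟨le_refl _, by positivity⟩)
  set C3 := max C2 1 with hC3_def
  have hC3pos : (0:ℝ) < C3 := lt_of_lt_of_le one_pos (le_max_right _ _)
  have hQbound : ∀ t : ℝ, 0 ≤ t → ‖exp ((t : ℂ) • Qc)‖ ≤ C3 := by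
    intro t ht
    by_cases hle : t ≤ (N1 : ℝ) + 1
    · exact le_trans (hC2 t ⟨ht, hle⟩) (le_max_left _ _)
    · push_neg at hle
      set m : ℕ := ⌊t⌋₊ with hm_def
      have hm_le : (m : ℝ) ≤ t := Nat.floor_le ht
      have ht_lt : t < m + 1 := Nat.lt_floor_add_one t
      have hmN : N1 ≤ m := by
        have h1 : (N1 : ℝ) < (m : ℝ) + 1 := by linarith
        have h2 : (N1 : ℝ) < (m : ℝ) + 1 := h1
        have : N1 < m + 1 := by exact_mod_cast h2
        omega
      have hsplit : (t : ℂ) • Qc = ((t - m : ℝ) : ℂ) • Qc + ((m : ℝ) : ℂ) • Qc := by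
        rw [← add_smul]
        norm_num
      have hcomm : Commute (((t - m : ℝ) : ℂ) • Qc) (((m : ℝ) : ℂ) • Qc) :=
        ((Commute.refl Qc).smul_left _).smul_right _
      have hEm : exp (((m : ℝ) : ℂ) • Qc) = E ^ m := by
        have h : (((m : ℝ) : ℂ)) • Qc = (m : ℕ) • Qc := by
          push_cast
          exact Nat.cast_smul_eq_nsmul ℂ m Qc
        rw [h]; exact NormedSpace.exp_nsmul m Qc
      rw [hsplit, show exp (((t - m : ℝ) : ℂ) • Qc + ((m : ℝ) : ℂ) • Qc) = exp (((t - m : ℝ) : ℂ) • Qc) * exp (((m : ℝ) : ℂ) • Qc) from exp_add_of_commute hcomm]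
      calc ‖exp (((t - m : ℝ) : ℂ) • Qc) * exp (((m : ℝ) : ℂ) • Qc)‖
          ≤ ‖exp (((t - m : ℝ) : ℂ) • Qc)‖ * ‖exp (((m : ℝ) : ℂ) • Qc)‖ := norm_mul_le _ _
        _ ≤ C2 * 1 := by
            refine mul_le_mul (hC2 _ ⟨sub_nonneg.mpr hm_le, by push_cast; linarith⟩) ?_
              (norm_nonneg _) hC2_nonneg
            rw [hEm]
            exact hpow m hmN
        _ ≤ C3 := by rw [mul_one]; exact le_max_left _ _
  refine ⟨C3, hC3pos, fun t ht => ?_⟩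
  -- transfer to the real matrix exponential
  have hmap_smul : (t • B).map (Complex.ofReal ·) = (t : ℂ) • Bc := by
    ext i j
    simp [Matrix.map_apply, hBc_def]
  have hmapexp : (exp (t • B)).map (Complex.ofReal ·) = exp ((t : ℂ) • Bc) := by
    have hf : Continuous fun M : Matrix n n ℝ => M.map (Complex.ofReal ·) :=
      Continuous.matrix_map continuous_id Complex.continuous_ofReal
    have h := map_exp (Complex.ofRealHom.mapMatrix : Matrix n n ℝ →+* Matrix n n ℂ) hf (t • B)
    rw [RingHom.mapMatrix_apply, RingHom.mapMatrix_apply] at h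
    calc (exp (t • B)).map (Complex.ofReal ·)
        = (exp (t • B)).map (⇑Complex.ofRealHom) := rfl
      _ = exp ((t • B).map (⇑Complex.ofRealHom)) := h
      _ = exp ((t : ℂ) • Bc) := congrArg _ hmap_smul
      _ = exp ((t : ℂ) • Bc) := rfl
  have hnorm_eq : ‖exp (t • B)‖ = ‖exp ((t : ℂ) • Bc)‖ := by
    rw [← hmapexp, norm_map_ofReal]
  have hBcQc : (t : ℂ) • Bc = (t : ℂ) • Qc + (-(κ * t) : ℂ) • 1 := by
    have : Bc = Qc - (κ : ℂ) • 1 := by rw [hQc_def]; abel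
    rw [this, smul_sub, smul_smul]
    push_cast
    rw [sub_eq_add_neg, ← neg_smul]
    ring_nf
  have hcomm2 : Commute ((t : ℂ) • Qc) ((-(κ * t) : ℂ) • (1 : Matrix n n ℂ)) :=
    ((Commute.one_right _)).smul_right _
  have hexp1 : exp ((-(κ * t) : ℂ) • (1 : Matrix n n ℂ))
      = Complex.exp (-(κ * t)) • 1 := by
    rw [← Algebra.algebraMap_eq_smul_one, show exp (algebraMap ℂ (Matrix n n ℂ) (-(κ * t) : ℂ)) = algebraMap ℂ (Matrix n n ℂ) (exp (-(κ * t) : ℂ)) from (algebraMap_exp_comm _).symm, ← Complex.exp_eq_exp_ℂ,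
      Algebra.algebraMap_eq_smul_one]
  rw [hnorm_eq, hBcQc, show exp ((t : ℂ) • Qc + (-(κ * t) : ℂ) • (1 : Matrix n n ℂ)) = exp ((t : ℂ) • Qc) * exp ((-(κ * t) : ℂ) • (1 : Matrix n n ℂ)) from exp_add_of_commute hcomm2, hexp1, mul_smul_comm, mul_one, norm_smul]
  have habs : ‖Complex.exp (-(κ * t) : ℂ)‖ = Real.exp (-(κ * t)) := by
    rw [Complex.norm_exp]
    norm_num
  rw [habs]
  rw [mul_comm C3 (Real.exp (-κ * t))]
  have := hQbound t ht
  have h4 : Real.exp (-(κ * t)) = Real.exp (-κ * t) := by ring_nf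
  rw [h4]
  exact mul_le_mul_of_nonneg_left this (Real.exp_pos _).le

lemma euclideanNorm_eq (x : n → ℝ) :
    euclideanNorm x = Real.sqrt (∑ i, x i ^ 2) := by
  rw [euclideanNorm, EuclideanSpace.norm_eq]
  congr 1
  refine Finset.sum_congr rfl fun i _ => ?_
  rw [show ((WithLp.equiv 2 (n → ℝ)).symm x).ofLp i = x i from rfl]
  rw [Real.norm_eq_abs, sq_abs]

lemma pi_norm_le_euclideanNorm (x : n → ℝ) : ‖x‖ ≤ euclideanNorm x := by
  rw [euclideanNorm_eq]
  refine pi_norm_le_iff_of_nonneg (Real.sqrt_nonneg _) |>.mpr fun i => ?_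
  rw [Real.norm_eq_abs, ← Real.sqrt_sq_eq_abs]
  exact Real.sqrt_le_sqrt (Finset.single_le_sum (fun j _ => sq_nonneg (x j)) (Finset.mem_univ i))

lemma euclideanNorm_le (x : n → ℝ) :
    euclideanNorm x ≤ Real.sqrt (Fintype.card n) * ‖x‖ := by
  rw [euclideanNorm_eq]
  have h1 : ∑ i, x i ^ 2 ≤ (Fintype.card n : ℝ) * ‖x‖ ^ 2 := by
    calc ∑ i, x i ^ 2 ≤ ∑ _i : n, ‖x‖ ^ 2 := by
          refine Finset.sum_le_sum fun i _ => ?_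
          have := norm_le_pi_norm x i
          calc x i ^ 2 = ‖x i‖ ^ 2 := by rw [Real.norm_eq_abs, sq_abs]
            _ ≤ ‖x‖ ^ 2 := pow_le_pow_left₀ (norm_nonneg _) this 2
      _ = (Fintype.card n : ℝ) * ‖x‖ ^ 2 := by
          rw [Finset.sum_const, Finset.card_univ, nsmul_eq_mul]
  calc Real.sqrt (∑ i, x i ^ 2) ≤ Real.sqrt ((Fintype.card n : ℝ) * ‖x‖ ^ 2) :=
        Real.sqrt_le_sqrt h1
    _ = Real.sqrt (Fintype.card n) * ‖x‖ := by
        rw [Real.sqrt_mul (Nat.cast_nonneg _), Real.sqrt_sq (norm_nonneg _)]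


end Aux

/-- Exponential convergence rate (Proposition 2): if every complex eigenvalue of
`β⁻¹ • A` has modulus at most `r < 1` and `λ̄` solves the mean-field ODE
`λ̄' = (A - β I) λ̄ + β μ` on `[0, ∞)`, then for every `0 < κ < β (1 - r)` there is a
constant `C > 0` with `‖λ̄ t - λ*‖ ≤ C e^{-κ t} ‖λ̄ 0 - λ*‖` for all `t ≥ 0`, where
`λ* = (I - β⁻¹ A)⁻¹ μ`. -/
theorem stmt9 {n : Type*} [Fintype n] [DecidableEq n] [Nonempty n]
    (A : Matrix n n ℝ) (β : ℝ) (hβ : 0 < β) (μ : n → ℝ) (r : ℝ)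
    (hr0 : 0 ≤ r) (hr1 : r < 1)
    (hspec : ∀ z ∈ spectrum ℂ ((β⁻¹ • A).map (Complex.ofReal ·)), ‖z‖ ≤ r)
    (lam : ℝ → n → ℝ)
    (hderiv : ∀ t : ℝ, 0 ≤ t →
      HasDerivAt lam ((A - β • (1 : Matrix n n ℝ)) *ᵥ lam t + β • μ) t) :
    ∀ κ : ℝ, 0 < κ → κ < β * (1 - r) →
      ∃ C > 0, ∀ t : ℝ, 0 ≤ t →
        euclideanNorm (lam t - ((1 : Matrix n n ℝ) - β⁻¹ • A)⁻¹ *ᵥ μ) ≤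
          C * Real.exp (-κ * t) *
            euclideanNorm (lam 0 - ((1 : Matrix n n ℝ) - β⁻¹ • A)⁻¹ *ᵥ μ) := by
  intro κ hκ0 hκβ
  classical
  set B' : Matrix n n ℝ := A - β • 1 with hB'_def
  set Mc : Matrix n n ℂ := (β⁻¹ • A).map (Complex.ofReal ·) with hMc_def
  set δ : ℝ := β * (1 - r) - κ with hδ_def
  have hδ : 0 < δ := by simp only [hδ_def]; linarith
  have hβc : ((β : ℂ)) ≠ 0 := by exact_mod_cast hβ.ne'
  -- β • Mc = Ac
  have hbMc : (β : ℂ) • Mc = A.map (Complex.ofReal ·) := by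
    ext i j
    simp [hMc_def, Matrix.map_apply, Matrix.smul_apply]
    field_simp
  -- spectrum of B'c
  have hspecB : ∀ z ∈ spectrum ℂ (B'.map (Complex.ofReal ·)), z.re ≤ -(κ + δ) := by
    intro z hz
    set w : ℂ := (z + β) / β with hw_def
    have hwmem : w ∈ spectrum ℂ Mc := by
      by_contra hnot
      have hunit : IsUnit (algebraMap ℂ (Matrix n n ℂ) w - Mc) := by
        rw [spectrum.notMem_iff] at hnot; exact hnot
      have heq : algebraMap ℂ (Matrix n n ℂ) z - B'.map (Complex.ofReal ·)
          = ((β : ℂ) • (1 : Matrix n n ℂ)) * (algebraMap ℂ (Matrix n n ℂ) w - Mc) := by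
        rw [smul_mul_assoc, one_mul, smul_sub, Algebra.algebraMap_eq_smul_one,
          Algebra.algebraMap_eq_smul_one, smul_smul, hbMc]
        have hβw : (β : ℂ) * w = z + β := by
          rw [hw_def]; field_simp
        rw [hβw]
        ext i j
        by_cases h : i = j <;>
          simp [h, hB'_def, Matrix.map_apply, Matrix.sub_apply, Matrix.smul_apply,
            Matrix.one_apply, Matrix.add_apply] <;> ring
      have hu1 : IsUnit ((β : ℂ) • (1 : Matrix n n ℂ)) := by
        rw [← Algebra.algebraMap_eq_smul_one]
        exact (isUnit_iff_ne_zero.mpr hβc).map (algebraMap ℂ (Matrix n n ℂ))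
      have : IsUnit (algebraMap ℂ (Matrix n n ℂ) z - B'.map (Complex.ofReal ·)) := by
        rw [heq]; exact hu1.mul hunit
      exact (spectrum.mem_iff.mp hz) this
    have habs : ‖w‖ ≤ r := hspec w hwmem
    have hre : w.re ≤ r := le_trans (Complex.re_le_norm w) habs
    have hzw : z = (β : ℂ) * w - β := by rw [hw_def]; field_simp; ring
    have hzre : z.re = β * w.re - β := by
      rw [hzw]
      simp [Complex.sub_re, Complex.mul_re]
    rw [hzre]
    have : β * w.re ≤ β * r := mul_le_mul_of_nonneg_left hre hβ.le
    simp only [hδ_def]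
    linarith
  -- invertibility of 1 - β⁻¹ A
  have hdet : IsUnit ((1 : Matrix n n ℝ) - β⁻¹ • A).det := by
    by_contra hnot
    have hdet0 : ((1 : Matrix n n ℝ) - β⁻¹ • A).det = 0 := by
      by_contra h0
      exact hnot (isUnit_iff_ne_zero.mpr h0)
    have hmapdet : ((1 : Matrix n n ℂ) - Mc).det = 0 := by
      have h1 : ((1 : Matrix n n ℝ) - β⁻¹ • A).map (Complex.ofReal ·) = (1 : Matrix n n ℂ) - Mc := by
        ext i j
        by_cases h : i = j <;>
          simp [h, Matrix.map_apply, Matrix.sub_apply, Matrix.one_apply, hMc_def]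
      have := (Complex.ofRealHom : ℝ →+* ℂ).map_det ((1 : Matrix n n ℝ) - β⁻¹ • A)
      rw [show (Complex.ofRealHom.mapMatrix ((1 : Matrix n n ℝ) - β⁻¹ • A)) = (1:Matrix n n ℂ) - Mc
        from h1] at this
      rw [← this, hdet0, map_zero]
    have hmem : (1 : ℂ) ∈ spectrum ℂ Mc := by
      rw [spectrum.mem_iff, _root_.map_one]
      intro hu
      have := (Matrix.isUnit_iff_isUnit_det _).mp hu
      rw [hmapdet] at this
      exact (isUnit_iff_ne_zero.mp this) rfl
    have := hspec 1 hmem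
    simp at this
    linarith
  set lamstar : n → ℝ := ((1 : Matrix n n ℝ) - β⁻¹ • A)⁻¹ *ᵥ μ with hls_def
  have hfix : B' *ᵥ lamstar = -(β • μ) := by
    have hA : B' = (-β) • ((1 : Matrix n n ℝ) - β⁻¹ • A) := by
      ext i j
      by_cases h : i = j <;>
        simp [h, hB'_def, Matrix.sub_apply, Matrix.smul_apply, Matrix.one_apply] <;> field_simp <;> ring
    rw [hA, Matrix.smul_mulVec, hls_def, Matrix.mulVec_mulVec,
      Matrix.mul_nonsing_inv _ hdet, Matrix.one_mulVec, neg_smul]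
  set w : ℝ → n → ℝ := fun t => lam t - lamstar with hw_def
  have hw : ∀ t : ℝ, 0 ≤ t → HasDerivAt w (B' *ᵥ w t) t := by
    intro t ht
    have h1 := (hderiv t ht).sub_const lamstar
    have h2 : B' *ᵥ w t = B' *ᵥ lam t + β • μ := by
      rw [hw_def]
      simp only
      rw [Matrix.mulVec_sub, hfix, sub_neg_eq_add]
    rw [h2]
    exact h1
  -- the exponential solution
  set g : ℝ → n → ℝ := fun t => exp (t • B') *ᵥ (w 0) with hg_def
  have hgderiv : ∀ t : ℝ, HasDerivAt g (B' *ᵥ g t) t := by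
    intro t
    let L : Matrix n n ℝ →ₗ[ℝ] (n → ℝ) :=
      { toFun := fun N => N *ᵥ (w 0)
        map_add' := fun a b => Matrix.add_mulVec a b (w 0)
        map_smul' := fun c N => Matrix.smul_mulVec c N (w 0) }
    let Lc : Matrix n n ℝ →L[ℝ] (n → ℝ) := ⟨L, L.continuous_of_finiteDimensional⟩
    have hexp := hasDerivAt_exp_smul_const' (𝕂 := ℝ) B' t
    have hcomp := Lc.hasFDerivAt.comp_hasDerivAt t hexp
    have h1 : Lc (B' * exp (t • B')) = B' *ᵥ g t := by
      show (B' * exp (t • B')) *ᵥ (w 0) = _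
      rw [← Matrix.mulVec_mulVec]
    rw [← h1]
    exact hcomp
  -- uniqueness
  let L2 : (n → ℝ) →ₗ[ℝ] (n → ℝ) := Matrix.mulVecLin B'
  let L2c : (n → ℝ) →L[ℝ] (n → ℝ) := ⟨L2, L2.continuous_of_finiteDimensional⟩
  have hkey : ∀ T : ℝ, 0 ≤ T → w T = g T := by
    intro T hT
    have := ODE_solution_unique_of_mem_Icc_right
      (v := fun _ x => L2c x) (K := ‖L2c‖₊) (s := fun _ => (Set.univ : Set (n → ℝ)))
      (f := w) (g := g) (a := 0) (b := T)
      (fun _ _ => L2c.lipschitz.lipschitzOnWith)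
      (fun t ht => ((hw t ht.1).continuousAt.continuousWithinAt))
      (fun t ht => by
        have := (hw t ht.1).hasDerivWithinAt (s := Set.Ici t)
        exact this)
      (fun t _ => Set.mem_univ _)
      (fun t _ => ((hgderiv t).continuousAt.continuousWithinAt))
      (fun t ht => by
        have := (hgderiv t).hasDerivWithinAt (s := Set.Ici t)
        exact this)
      (fun t _ => Set.mem_univ _)
      (by
        rw [hg_def]
        simp only
        rw [zero_smul, NormedSpace.exp_zero, Matrix.one_mulVec])
    exact this ⟨hT, le_refl T⟩
  obtain ⟨C1, hC1pos, hC1⟩ := exp_norm_decay B' κ δ hδ hspecB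
  have hcard : (0:ℝ) < Real.sqrt (Fintype.card n) := by
    have : 0 < Fintype.card n := Fintype.card_pos
    positivity
  refine ⟨Real.sqrt (Fintype.card n) * C1, by positivity, fun t ht => ?_⟩
  have hchain : euclideanNorm (w t) ≤
      Real.sqrt (Fintype.card n) * C1 * Real.exp (-κ * t) * euclideanNorm (w 0) := by
    calc euclideanNorm (w t) ≤ Real.sqrt (Fintype.card n) * ‖w t‖ := euclideanNorm_le _
      _ = Real.sqrt (Fintype.card n) * ‖exp (t • B') *ᵥ (w 0)‖ := by rw [hkey t ht]
      _ ≤ Real.sqrt (Fintype.card n) * (‖exp (t • B')‖ * ‖w 0‖) := by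
          exact mul_le_mul_of_nonneg_left (Matrix.linfty_opNorm_mulVec _ _) hcard.le
      _ ≤ Real.sqrt (Fintype.card n) * ((C1 * Real.exp (-κ * t)) * ‖w 0‖) := by
          refine mul_le_mul_of_nonneg_left ?_ hcard.le
          exact mul_le_mul_of_nonneg_right (hC1 t ht) (norm_nonneg _)
      _ ≤ Real.sqrt (Fintype.card n) * ((C1 * Real.exp (-κ * t)) * euclideanNorm (w 0)) := by
          refine mul_le_mul_of_nonneg_left ?_ hcard.le
          refine mul_le_mul_of_nonneg_left (pi_norm_le_euclideanNorm _) ?_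
          positivity
      _ = Real.sqrt (Fintype.card n) * C1 * Real.exp (-κ * t) * euclideanNorm (w 0) := by ring
  exact hchain
end
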